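/- H_{−1} bound via the spectral gap (Proposition 4.4). Let r, ε₀, L be as in the lattice gas setup, fix ρ ∈ (0,1), and suppose the spectral gap inequality ∫ h² dν_ρ ≤ κ₀ ℓ² E_ℓ(h) holds with constant κ₀ for all ℓ and all local h supported in {1,…,ℓ} with φ_h ≡ 0. Then there exists a constant c depending only on κ₀ and ε₀ such that for every ℓ ∈ ℕ and every local f with supp(f) ⊆ {1,…,ℓ} and φ_f(β) = 0 for all β ∈ [0,1], one has ‖f‖²_{−1} := sup over local g of {2⟨f,g⟩_ρ − ⟨g, −Lg⟩_ρ} ≤ c · ℓ² · Var(f; ν_ρ). -/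

import Mathlib

open MeasureTheory Finset

noncomputable section

/-- Configurations of the lattice gas: elements of `{0,1}^ℤ`, encoded as `ℤ → Bool`. -/
abbrev Cfg : Type := ℤ → Bool

/-- The configuration whose occupied sites are exactly the finite set `S`. -/
def cfgOf (S : Finset ℤ) : Cfg := fun z => decide (z ∈ S)

/-- `f` depends only on the coordinates in the finite set `A`
(i.e. `f` is local with `supp f ⊆ A`). -/
def LocalOn (A : Finset ℤ) (f : Cfg → ℝ) : Prop :=
  ∀ η ξ : Cfg, (∀ x ∈ A, η x = ξ x) → f η = f ξ

/-- `f` is a local function. -/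
def IsLocal (f : Cfg → ℝ) : Prop := ∃ A : Finset ℤ, LocalOn A f

/-- For `f` depending only on the coordinates in `A`, `phi A f β = ∫ f dν_β` where `ν_β`
is the Bernoulli product measure of density `β`; written as an explicit polynomial in `β`. -/
def phi (A : Finset ℤ) (f : Cfg → ℝ) (β : ℝ) : ℝ :=
  ∑ S ∈ A.powerset, β ^ S.card * (1 - β) ^ (A.card - S.card) * f (cfgOf S)

/-- `ψ_f(ℓ; m)`: the average of `f` over all configurations of `{1,…,ℓ}`
having exactly `m` particles. -/
def condAvg (ℓ m : ℕ) (f : Cfg → ℝ) : ℝ :=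
  (∑ S ∈ (Finset.Icc (1 : ℤ) (ℓ : ℤ)).powerset.filter (fun S => S.card = m), f (cfgOf S))
    / (ℓ.choose m : ℝ)

/-- `μ` is the product Bernoulli measure on `{0,1}^ℤ` of density `ρ`: it is a probability
measure under which the coordinates are i.i.d. with `μ(η x = 1) = ρ`. -/
def IsBernoulliProduct (ρ : ℝ) (μ : Measure Cfg) : Prop :=
  IsProbabilityMeasure μ ∧
    ∀ (A : Finset ℤ) (σ : Cfg),
      (μ {η : Cfg | ∀ x ∈ A, η x = σ x}).toReal
        = ∏ x ∈ A, (if σ x then ρ else 1 - ρ)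

/-- The number of particles of `η` in `{1,…,ℓ}`. -/
def numOnes (ℓ : ℕ) (η : Cfg) : ℕ := ∑ x ∈ Finset.Icc (1 : ℤ) (ℓ : ℤ), (η x).toNat

/-- The empirical density `η^ℓ` of particles in `{1,…,ℓ}`. -/
def empDens (ℓ : ℕ) (η : Cfg) : ℝ := (numOnes ℓ η : ℝ) / (ℓ : ℝ)

/-- `ψ_f(ℓ)`: the conditional expectation of `f` given the particle number in `{1,…,ℓ}`,
as a function on configurations. -/
def psiFun (ℓ : ℕ) (f : Cfg → ℝ) : Cfg → ℝ := fun η => condAvg ℓ (numOnes ℓ η) f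

/-- The variance of `g` with respect to the measure `μ`. -/
def Var (μ : Measure Cfg) (g : Cfg → ℝ) : ℝ := ∫ η, (g η - ∫ ξ, g ξ ∂μ) ^ 2 ∂μ

/-- The configuration `η^{x,y}`, obtained from `η` by exchanging coordinates `x` and `y`. -/
def swapCfg (x y : ℤ) (η : Cfg) : Cfg :=
  fun z => if z = x then η y else if z = y then η x else η z

/-- `∇_{x,y} f (η) = f(η^{x,y}) - f(η)`. -/
def discGrad (x y : ℤ) (f : Cfg → ℝ) : Cfg → ℝ := fun η => f (swapCfg x y η) - f η

/-- The translated rate `r_x = τ_x r`, the exchange rate of the bond `{x, x+1}`;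
it does not depend on the coordinates `x` and `x+1` when `r` does not depend on
the coordinates `0` and `1`. -/
def shiftRate (r : Cfg → ℝ) (x : ℤ) (η : Cfg) : ℝ := r (fun z => η (z + x))

/-- The lattice gas generator `L f = ∑_{x ∈ ℤ} r_x ∇_{x,x+1} f`; for local `f` the sum
has only finitely many nonzero terms. -/
def genL (r : Cfg → ℝ) (f : Cfg → ℝ) : Cfg → ℝ :=
  fun η => ∑ᶠ x : ℤ, shiftRate r x η * discGrad x (x + 1) f η

/-!
Average `g` over the coordinates outside `{1,…,ℓ}` (the conditional expectation `ḡ`), then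
subtract from `ḡ` its canonical average `ψ`, the conditional expectation given the number of
particles in the block. Neither step changes `⟨f, g⟩_ρ`: `f` lives on the block, and `φ_f ≡ 0`
says exactly that all canonical averages of `f` vanish, so `f ⟂ ψ`. The function `h = ḡ - ψ`
lives on the block and has vanishing canonical averages, hence `φ_h ≡ 0`; averaging does not
increase the energy of the bonds inside the block, so `E_ℓ(h) ≤ E_ℓ(g) ≤ (2/ε₀)⟨g, -Lg⟩_ρ`.
Cauchy–Schwarz and the spectral gap give `⟨f, g⟩_ρ² ≤ (2κ₀ℓ²/ε₀) Var(f; ν_ρ) ⟨g, -Lg⟩_ρ`,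
and AM-GM turns this into the bound with `c = 2 max(κ₀, 0)/ε₀`.
-/

namespace LocalOn

variable {A B : Finset ℤ} {f g : Cfg → ℝ}

lemma mono (hAB : A ⊆ B) (hf : LocalOn A f) : LocalOn B f :=
  fun η ξ h => hf η ξ fun x hx => h x (hAB hx)

lemma mul (hf : LocalOn A f) (hg : LocalOn A g) : LocalOn A (fun η => f η * g η) :=
  fun η ξ h => by simp only [hf η ξ h, hg η ξ h]

lemma sub (hf : LocalOn A f) (hg : LocalOn A g) : LocalOn A (fun η => f η - g η) :=
  fun η ξ h => by simp only [hf η ξ h, hg η ξ h]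

lemma pow (hf : LocalOn A f) (n : ℕ) : LocalOn A (fun η => f η ^ n) :=
  fun η ξ h => by simp only [hf η ξ h]

lemma const_mul (hf : LocalOn A f) (c : ℝ) : LocalOn A (fun η => c * f η) :=
  fun η ξ h => by simp only [hf η ξ h]

lemma sum {κ : Type*} {s : Finset κ} {F : κ → Cfg → ℝ} (hF : ∀ k ∈ s, LocalOn A (F k)) :
    LocalOn A (fun η => ∑ k ∈ s, F k η) :=
  fun η ξ h => Finset.sum_congr rfl fun k hk => hF k hk η ξ h

lemma comp_swapCfg {x y : ℤ} (hx : x ∈ A) (hy : y ∈ A) (hf : LocalOn A f) :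
    LocalOn A (fun η => f (swapCfg x y η)) := by
  refine fun η ξ h => hf _ _ fun z hz => ?_
  simp only [swapCfg]
  split_ifs
  exacts [h y hy, h x hx, h z hz]

lemma discGrad {x y : ℤ} (hx : x ∈ A) (hy : y ∈ A) (hf : LocalOn A f) :
    LocalOn A (discGrad x y f) :=
  (hf.comp_swapCfg hx hy).sub hf

end LocalOn

def cylSet (A : Finset ℤ) (σ : Cfg) : Set Cfg := {η : Cfg | ∀ x ∈ A, η x = σ x}

lemma measurableSet_cylSet (A : Finset ℤ) (σ : Cfg) : MeasurableSet (cylSet A σ) := by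
  have : cylSet A σ = ⋂ x ∈ (A : Set ℤ), (fun η : Cfg => η x) ⁻¹' {σ x} := by
    ext η; simp [cylSet]
  rw [this]
  exact .biInter A.countable_toSet fun x _ => measurable_pi_apply x (measurableSet_singleton _)

lemma mem_cylSet_cfgOf_iff {A S : Finset ℤ} (hS : S ⊆ A) (η : Cfg) :
    η ∈ cylSet A (cfgOf S) ↔ S = A.filter (fun x => η x = true) := by
  simp only [cylSet, Set.mem_ofPred_eq, cfgOf, Finset.ext_iff, mem_filter]
  constructor
  · intro h x
    by_cases hxA : x ∈ A
    · simp [h x hxA, hxA]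
    · exact iff_of_false (fun hxS => hxA (hS hxS)) (fun h' => hxA h'.1)
  · intro h x hxA
    cases hη : η x <;> simp [h, hxA, hη]

lemma LocalOn.eq_sum_indicator {A : Finset ℤ} {f : Cfg → ℝ} (hf : LocalOn A f) (η : Cfg) :
    f η = ∑ S ∈ A.powerset, (cylSet A (cfgOf S)).indicator (fun _ => f (cfgOf S)) η := by
  have hη := (mem_cylSet_cfgOf_iff (filter_subset _ A) η).2 rfl
  rw [sum_eq_single_of_mem _ (mem_powerset.2 (filter_subset _ A)) fun S hS hne =>
    Set.indicator_of_notMem (fun h => hne ((mem_cylSet_cfgOf_iff (mem_powerset.1 hS) η).1 h)) _,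
    Set.indicator_of_mem hη]
  exact hf η _ hη

lemma LocalOn.integrable {μ : Measure Cfg} [IsFiniteMeasure μ] {A : Finset ℤ} {f : Cfg → ℝ}
    (hf : LocalOn A f) : Integrable f μ := by
  rw [funext hf.eq_sum_indicator]
  exact integrable_finsetSum _ fun S _ =>
    (integrable_const _).indicator (measurableSet_cylSet A _)

def bernWeight (ρ : ℝ) (A S : Finset ℤ) : ℝ := ρ ^ S.card * (1 - ρ) ^ (A.card - S.card)

section BernoulliWeights

variable {ρ : ℝ}

lemma bernWeight_nonneg (hρ : ρ ∈ Set.Icc (0 : ℝ) 1) (A S : Finset ℤ) : 0 ≤ bernWeight ρ A S :=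
  mul_nonneg (pow_nonneg hρ.1 _) (pow_nonneg (sub_nonneg.2 hρ.2) _)

lemma sum_bernWeight (ρ : ℝ) (A : Finset ℤ) : ∑ S ∈ A.powerset, bernWeight ρ A S = 1 := by
  have := sum_pow_mul_eq_add_pow ρ (1 - ρ) A
  rwa [add_sub_cancel, one_pow] at this

lemma prod_ite_cfgOf_eq_bernWeight {A S : Finset ℤ} (hS : S ⊆ A) :
    ∏ x ∈ A, (if cfgOf S x then ρ else 1 - ρ) = bernWeight ρ A S := by
  rw [← prod_sdiff hS,
    prod_congr rfl fun x hx => if_neg (by simpa [cfgOf] using (mem_sdiff.1 hx).2),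
    prod_congr rfl fun x hx => if_pos (by simpa [cfgOf] using hx), prod_const, prod_const,
    card_sdiff_of_subset hS, bernWeight, mul_comm]

lemma bernWeight_union {I J S₁ S₂ : Finset ℤ} (hIJ : Disjoint I J) (h₁ : S₁ ⊆ I) (h₂ : S₂ ⊆ J) :
    bernWeight ρ (I ∪ J) (S₁ ∪ S₂) = bernWeight ρ I S₁ * bernWeight ρ J S₂ := by
  have c₁ := card_le_card h₁
  have c₂ := card_le_card h₂
  rw [bernWeight, bernWeight, bernWeight, card_union_of_disjoint (hIJ.mono h₁ h₂),
    card_union_of_disjoint hIJ, show I.card + J.card - (S₁.card + S₂.card)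
      = (I.card - S₁.card) + (J.card - S₂.card) by omega, pow_add, pow_add]
  ring

lemma sum_powerset_union_bernWeight_mul {I J : Finset ℤ} (hIJ : Disjoint I J)
    (G : Finset ℤ → ℝ) :
    ∑ S ∈ (I ∪ J).powerset, bernWeight ρ (I ∪ J) S * G S
      = ∑ S₁ ∈ I.powerset, ∑ S₂ ∈ J.powerset,
          bernWeight ρ I S₁ * bernWeight ρ J S₂ * G (S₁ ∪ S₂) := by
  classical
  rw [← sum_product']
  refine sum_nbij' (fun S => (S ∩ I, S ∩ J)) (fun p => p.1 ∪ p.2) (fun S _ => ?_) (fun p hp => ?_)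
    (fun S hS => ?_) (fun p hp => ?_) (fun S hS => ?_)
  · simp [inter_subset_right]
  · simp only [mem_product, mem_powerset] at hp ⊢
    exact union_subset_union hp.1 hp.2
  · rw [← inter_union_distrib_left, inter_eq_left.2 (mem_powerset.1 hS)]
  · simp only [mem_product, mem_powerset] at hp
    simp only [union_inter_distrib_right, inter_eq_left.2 hp.1, inter_eq_left.2 hp.2,
      disjoint_iff_inter_eq_empty.1 (hIJ.mono_left hp.1),
      disjoint_iff_inter_eq_empty.1 (hIJ.symm.mono_left hp.2), union_empty, empty_union]
  · have hU : S ∩ I ∪ S ∩ J = S := by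
      rw [← inter_union_distrib_left, inter_eq_left.2 (mem_powerset.1 hS)]
    dsimp only
    rw [hU, ← bernWeight_union hIJ inter_subset_right inter_subset_right, hU]

end BernoulliWeights

namespace IsBernoulliProduct

variable {ρ : ℝ} {μ : Measure Cfg}

lemma integral_eq_sum (hμ : IsBernoulliProduct ρ μ) {A : Finset ℤ} {f : Cfg → ℝ}
    (hf : LocalOn A f) : ∫ η, f η ∂μ = ∑ S ∈ A.powerset, bernWeight ρ A S * f (cfgOf S) := by
  have := hμ.1
  rw [integral_congr_ae (ae_of_all _ hf.eq_sum_indicator), integral_finsetSum _ fun S _ =>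
    (integrable_const _).indicator (measurableSet_cylSet A _)]
  refine sum_congr rfl fun S hS => ?_
  rw [integral_indicator_const _ (measurableSet_cylSet A _), smul_eq_mul, measureReal_def,
    cylSet, hμ.2, prod_ite_cfgOf_eq_bernWeight (mem_powerset.1 hS)]

lemma mem_Icc (hμ : IsBernoulliProduct ρ μ) : ρ ∈ Set.Icc (0 : ℝ) 1 := by
  have h₁ := hμ.2 {0} fun _ => true
  have h₀ := hμ.2 {0} fun _ => false
  simp only [prod_singleton, if_true, Bool.false_eq_true, if_false] at h₁ h₀
  exact ⟨h₁ ▸ ENNReal.toReal_nonneg, sub_nonneg.1 (h₀ ▸ ENNReal.toReal_nonneg)⟩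

lemma sq_integral_mul_le (hμ : IsBernoulliProduct ρ μ) {A : Finset ℤ} {f g : Cfg → ℝ}
    (hf : LocalOn A f) (hg : LocalOn A g) :
    (∫ η, f η * g η ∂μ) ^ 2 ≤ (∫ η, f η ^ 2 ∂μ) * ∫ η, g η ^ 2 ∂μ := by
  rw [hμ.integral_eq_sum (hf.mul hg), hμ.integral_eq_sum (hf.pow 2), hμ.integral_eq_sum (hg.pow 2)]
  have hw := bernWeight_nonneg hμ.mem_Icc A
  exact sum_sq_le_sum_mul_sum_of_sq_le_mul _ (fun S _ => mul_nonneg (hw S) (sq_nonneg _))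
    (fun S _ => mul_nonneg (hw S) (sq_nonneg _)) fun S _ => le_of_eq (by ring)

end IsBernoulliProduct

lemma phi_eq_sum_range (A : Finset ℤ) (f : Cfg → ℝ) (β : ℝ) :
    phi A f β = ∑ k ∈ range (A.card + 1),
      β ^ k * (1 - β) ^ (A.card - k) * ∑ S ∈ A.powersetCard k, f (cfgOf S) := by
  rw [phi, sum_powerset]
  refine sum_congr rfl fun k _ => ?_
  rw [mul_sum]
  exact sum_congr rfl fun S hS => by rw [(mem_powersetCard.1 hS).2]

lemma one_add_pow_mul_phi (A : Finset ℤ) (f : Cfg → ℝ) {t : ℝ} (ht : 0 ≤ t) :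
    (1 + t) ^ A.card * phi A f (t / (1 + t))
      = ∑ k ∈ range (A.card + 1), (∑ S ∈ A.powersetCard k, f (cfgOf S)) * t ^ k := by
  rw [phi_eq_sum_range, mul_sum]
  refine sum_congr rfl fun k hk => ?_
  obtain ⟨j, hj⟩ := Nat.exists_eq_add_of_le (Nat.lt_succ_iff.1 (mem_range.1 hk))
  have h1t : 1 + t ≠ 0 := by positivity
  rw [hj, Nat.add_sub_cancel_left, pow_add, one_sub_div h1t, add_sub_cancel_right, div_pow,
    div_pow, one_pow]
  field_simp

lemma eq_zero_of_forall_sum_mul_pow_eq_zero {a : ℕ → ℝ} {N : ℕ}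
    (h : ∀ t : ℝ, 0 ≤ t → ∑ k ∈ range N, a k * t ^ k = 0) {m : ℕ} (hm : m < N) : a m = 0 := by
  open Polynomial in
  set p : ℝ[X] := ∑ k ∈ range N, C (a k) * X ^ k
  have hp : p = 0 := p.eq_zero_of_infinite_isRoot <| (Set.Ici_infinite (0 : ℝ)).mono fun t ht => by
    simpa [p, eval_finsetSum] using h t ht
  have := congrArg (coeff · m) hp
  simpa [p, finsetSum_coeff, coeff_C_mul_X_pow, hm] using this

lemma phi_eq_zero_iff {A : Finset ℤ} {f : Cfg → ℝ} :
    (∀ β ∈ Set.Icc (0 : ℝ) 1, phi A f β = 0) ↔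
      ∀ k, ∑ S ∈ A.powersetCard k, f (cfgOf S) = 0 := by
  refine ⟨fun h k => ?_, fun h β _ => by simp [phi_eq_sum_range, h]⟩
  rcases le_or_gt k A.card with hk | hk
  · refine eq_zero_of_forall_sum_mul_pow_eq_zero (a := fun k => ∑ S ∈ A.powersetCard k, f (cfgOf S))
      (fun t ht => ?_) (Nat.lt_succ_of_le hk)
    have hβ : t / (1 + t) ∈ Set.Icc (0 : ℝ) 1 :=
      ⟨by positivity, (div_le_one (by positivity)).2 (by linarith)⟩
    rw [← one_add_pow_mul_phi A f ht, h _ hβ, mul_zero]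
  · simp [powersetCard_eq_empty.2 hk]

lemma swapCfg_eq_comp (x y : ℤ) (η : Cfg) : swapCfg x y η = η ∘ Equiv.swap x y := by
  funext z
  simp only [swapCfg, Function.comp, Equiv.swap_apply_def]
  split_ifs <;> rfl

lemma swap_apply_mem_iff {A : Finset ℤ} {x y : ℤ} (hx : x ∈ A) (hy : y ∈ A) (z : ℤ) :
    Equiv.swap x y z ∈ A ↔ z ∈ A := by
  rw [Equiv.swap_apply_def]
  split_ifs <;> simp_all

lemma cfgOf_comp_perm (S : Finset ℤ) (σ : Equiv.Perm ℤ) :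
    cfgOf S ∘ σ = cfgOf (S.map σ.symm.toEmbedding) := by
  funext z
  simp [cfgOf, mem_map_equiv]

lemma IsBernoulliProduct.integral_comp_perm {ρ : ℝ} {μ : Measure Cfg}
    (hμ : IsBernoulliProduct ρ μ) {A : Finset ℤ} {f : Cfg → ℝ} (hf : LocalOn A f)
    {σ : Equiv.Perm ℤ} (hσ : ∀ z, σ z ∈ A ↔ z ∈ A) :
    ∫ η, f (η ∘ σ) ∂μ = ∫ η, f η ∂μ := by
  have hfσ : LocalOn A (fun η => f (η ∘ σ)) :=
    fun η ξ h => hf _ _ fun z hz => h _ ((hσ z).2 hz)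
  have hσ' : ∀ z, σ.symm z ∈ A ↔ z ∈ A := fun z => by rw [← hσ, Equiv.apply_symm_apply]
  rw [hμ.integral_eq_sum hfσ, hμ.integral_eq_sum hf]
  refine sum_nbij' (fun S => S.map σ.symm.toEmbedding) (fun S => S.map σ.toEmbedding)
    (fun S hS => ?_) (fun S hS => ?_) (fun S _ => ?_) (fun S _ => ?_) (fun S _ => ?_)
  · simp only [mem_powerset] at hS ⊢
    exact fun z hz => (hσ z).1 (hS (mem_map_equiv.1 hz))
  · simp only [mem_powerset] at hS ⊢
    exact fun z hz => (hσ' z).1 (hS (by simpa using hz))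
  · simp [map_map]
  · simp [map_map]
  · simp only [cfgOf_comp_perm, bernWeight, card_map]

lemma IsBernoulliProduct.integral_comp_swapCfg {ρ : ℝ} {μ : Measure Cfg}
    (hμ : IsBernoulliProduct ρ μ) {A : Finset ℤ} {f : Cfg → ℝ} (hf : LocalOn A f) {x y : ℤ}
    (hx : x ∈ A) (hy : y ∈ A) : ∫ η, f (swapCfg x y η) ∂μ = ∫ η, f η ∂μ := by
  simp only [swapCfg_eq_comp]
  exact hμ.integral_comp_perm hf (swap_apply_mem_iff hx hy)

section ParticleNumber

variable {ℓ : ℕ}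

lemma numOnes_swapCfg {x y : ℤ} (hx : x ∈ Icc (1 : ℤ) ℓ) (hy : y ∈ Icc (1 : ℤ) ℓ) (η : Cfg) :
    numOnes ℓ (swapCfg x y η) = numOnes ℓ η :=
  sum_equiv (Equiv.swap x y) (fun z => (swap_apply_mem_iff hx hy z).symm) fun z _ => by
    rw [swapCfg_eq_comp, Function.comp_apply]

lemma numOnes_cfgOf {S : Finset ℤ} (hS : S ⊆ Icc (1 : ℤ) ℓ) : numOnes ℓ (cfgOf S) = S.card := by
  have : ∀ x, (decide (x ∈ S)).toNat = if x ∈ S then 1 else 0 := fun x => by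
    by_cases h : x ∈ S <;> simp [h]
  simp only [numOnes, cfgOf, this, sum_boole, filter_mem_eq_inter, inter_eq_right.2 hS]
  simp

lemma localOn_comp_numOnes (G : ℕ → ℝ) : LocalOn (Icc (1 : ℤ) ℓ) (fun η => G (numOnes ℓ η)) :=
  fun η ξ h => by simp only [numOnes, sum_congr rfl fun z hz => congrArg Bool.toNat (h z hz)]

lemma localOn_psiFun (F : Cfg → ℝ) : LocalOn (Icc (1 : ℤ) ℓ) (psiFun ℓ F) :=
  localOn_comp_numOnes fun m => condAvg ℓ m F

lemma psiFun_swapCfg {x y : ℤ} (hx : x ∈ Icc (1 : ℤ) ℓ) (hy : y ∈ Icc (1 : ℤ) ℓ)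
    (F : Cfg → ℝ) (η : Cfg) : psiFun ℓ F (swapCfg x y η) = psiFun ℓ F η := by
  simp only [psiFun, numOnes_swapCfg hx hy]

lemma sum_powersetCard_sub_psiFun (F : Cfg → ℝ) (k : ℕ) :
    ∑ S ∈ (Icc (1 : ℤ) ℓ).powersetCard k, (F (cfgOf S) - psiFun ℓ F (cfgOf S)) = 0 := by
  set P := (Icc (1 : ℤ) ℓ).powersetCard k
  have hψ : ∀ S ∈ P, psiFun ℓ F (cfgOf S) = (∑ S' ∈ P, F (cfgOf S')) / P.card := by
    intro S hS
    obtain ⟨hSI, rfl⟩ := mem_powersetCard.1 hS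
    rw [psiFun, numOnes_cfgOf hSI, condAvg, ← powersetCard_eq_filter, card_powersetCard]
    simp [P]
  rcases P.eq_empty_or_nonempty with hP | hP
  · simp [hP]
  rw [sum_congr rfl fun S hS => by rw [hψ S hS], sum_sub_distrib, sum_const, nsmul_eq_mul,
    mul_div_cancel₀ _ (Nat.cast_ne_zero.2 hP.card_pos.ne'), sub_self]

lemma IsBernoulliProduct.integral_mul_comp_numOnes_eq_zero {ρ : ℝ} {μ : Measure Cfg}
    (hμ : IsBernoulliProduct ρ μ) {f : Cfg → ℝ} (hf : LocalOn (Icc (1 : ℤ) ℓ) f)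
    (hf₀ : ∀ k, ∑ S ∈ (Icc (1 : ℤ) ℓ).powersetCard k, f (cfgOf S) = 0) (G : ℕ → ℝ) :
    ∫ η, f η * G (numOnes ℓ η) ∂μ = 0 := by
  rw [hμ.integral_eq_sum (hf.mul (localOn_comp_numOnes G)), sum_powerset]
  refine sum_eq_zero fun k _ => ?_
  rw [← mul_zero (ρ ^ k * (1 - ρ) ^ ((Icc (1 : ℤ) ℓ).card - k) * G k), ← hf₀ k, mul_sum]
  refine sum_congr rfl fun S hS => ?_
  obtain ⟨hSI, rfl⟩ := mem_powersetCard.1 hS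
  rw [numOnes_cfgOf hSI, bernWeight]
  ring

lemma IsBernoulliProduct.integral_mul_sub_psiFun {ρ : ℝ} {μ : Measure Cfg}
    (hμ : IsBernoulliProduct ρ μ) {f F : Cfg → ℝ} (hf : LocalOn (Icc (1 : ℤ) ℓ) f)
    (hf₀ : ∀ k, ∑ S ∈ (Icc (1 : ℤ) ℓ).powersetCard k, f (cfgOf S) = 0)
    (hF : LocalOn (Icc (1 : ℤ) ℓ) F) :
    ∫ η, f η * (F η - psiFun ℓ F η) ∂μ = ∫ η, f η * F η ∂μ := by
  have := hμ.1
  simp only [mul_sub]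
  rw [integral_sub (hf.mul hF).integrable (hf.mul (localOn_psiFun F)).integrable, sub_eq_self]
  exact hμ.integral_mul_comp_numOnes_eq_zero hf hf₀ fun m => condAvg ℓ m F

end ParticleNumber

def replaceOn (J T : Finset ℤ) (η : Cfg) : Cfg := fun z => if z ∈ J then decide (z ∈ T) else η z

/-- The conditional expectation under `ν_ρ` given the coordinates outside `J`. -/
def blockAvg (ρ : ℝ) (J : Finset ℤ) (g : Cfg → ℝ) : Cfg → ℝ :=
  fun η => ∑ T ∈ J.powerset, bernWeight ρ J T * g (replaceOn J T η)

section BlockAverage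

variable {ρ : ℝ} {J : Finset ℤ}

lemma replaceOn_cfgOf {T S : Finset ℤ} (hT : T ⊆ J) (hS : Disjoint S J) :
    replaceOn J T (cfgOf S) = cfgOf (S ∪ T) := by
  funext z
  by_cases hz : z ∈ J
  · simp [replaceOn, cfgOf, hz, disjoint_right.1 hS hz]
  · have hzT : z ∉ T := fun h => hz (hT h)
    simp [replaceOn, cfgOf, hz, hzT]

lemma replaceOn_swapCfg {T : Finset ℤ} {x y : ℤ} (hx : x ∉ J) (hy : y ∉ J) (η : Cfg) :
    replaceOn J T (swapCfg x y η) = swapCfg x y (replaceOn J T η) := by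
  funext z
  by_cases hz : z ∈ J
  · have hzx : z ≠ x := by rintro rfl; exact hx hz
    have hzy : z ≠ y := by rintro rfl; exact hy hz
    simp [swapCfg, replaceOn, hz, hzx, hzy]
  · simp only [swapCfg, replaceOn]
    split_ifs <;> simp_all

lemma LocalOn.blockAvg {B : Finset ℤ} {g : Cfg → ℝ} (hg : LocalOn B g) :
    LocalOn (B \ J) (blockAvg ρ J g) :=
  LocalOn.sum fun T _ => LocalOn.const_mul (fun η ξ h => hg _ _ fun z hz => by
    by_cases hzJ : z ∈ J
    · simp [replaceOn, hzJ]
    · simp only [replaceOn, if_neg hzJ]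
      exact h z (mem_sdiff.2 ⟨hz, hzJ⟩)) _

lemma blockAvg_mul_of_disjoint {A : Finset ℤ} {f : Cfg → ℝ} (hf : LocalOn A f)
    (hAJ : Disjoint A J) (g : Cfg → ℝ) (η : Cfg) :
    blockAvg ρ J (fun ξ => f ξ * g ξ) η = f η * blockAvg ρ J g η := by
  rw [blockAvg, blockAvg, mul_sum]
  refine sum_congr rfl fun T _ => ?_
  rw [hf (replaceOn J T η) η fun z hz => by simp [replaceOn, disjoint_left.1 hAJ hz]]
  ring

lemma discGrad_blockAvg {x y : ℤ} (hx : x ∉ J) (hy : y ∉ J) (g : Cfg → ℝ) :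
    discGrad x y (blockAvg ρ J g) = blockAvg ρ J (discGrad x y g) := by
  funext η
  simp only [discGrad, blockAvg, replaceOn_swapCfg hx hy, ← sum_sub_distrib, mul_sub]

lemma sq_blockAvg_le (hρ : ρ ∈ Set.Icc (0 : ℝ) 1) (g : Cfg → ℝ) (η : Cfg) :
    blockAvg ρ J g η ^ 2 ≤ blockAvg ρ J (fun ξ => g ξ ^ 2) η := by
  have hw := bernWeight_nonneg hρ J
  have := sum_sq_le_sum_mul_sum_of_sq_le_mul J.powerset (fun T _ => hw T)
    (fun T _ => mul_nonneg (hw T) (sq_nonneg (g (replaceOn J T η))))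
    (r := fun T => bernWeight ρ J T * g (replaceOn J T η)) fun T _ => le_of_eq (by ring)
  rwa [sum_bernWeight, one_mul] at this

namespace IsBernoulliProduct

variable {μ : Measure Cfg}

lemma integral_blockAvg (hμ : IsBernoulliProduct ρ μ) {B : Finset ℤ} {g : Cfg → ℝ}
    (hg : LocalOn B g) : ∫ η, blockAvg ρ J g η ∂μ = ∫ η, g η ∂μ := by
  have hg' : LocalOn (B \ J ∪ J) g :=
    hg.mono (by rw [sdiff_union_self_eq_union]; exact subset_union_left)
  rw [hμ.integral_eq_sum hg.blockAvg, hμ.integral_eq_sum hg',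
    sum_powerset_union_bernWeight_mul sdiff_disjoint]
  refine sum_congr rfl fun S hS => ?_
  rw [blockAvg, mul_sum]
  refine sum_congr rfl fun T hT => ?_
  rw [replaceOn_cfgOf (mem_powerset.1 hT) (sdiff_disjoint.mono_left (mem_powerset.1 hS))]
  ring

lemma integral_mul_blockAvg (hμ : IsBernoulliProduct ρ μ) {A B : Finset ℤ} {f g : Cfg → ℝ}
    (hf : LocalOn A f) (hAJ : Disjoint A J) (hg : LocalOn B g) :
    ∫ η, f η * g η ∂μ = ∫ η, f η * blockAvg ρ J g η ∂μ := by
  simp only [← blockAvg_mul_of_disjoint hf hAJ]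
  exact (hμ.integral_blockAvg ((hf.mono subset_union_left).mul (hg.mono subset_union_right))).symm

lemma integral_sq_blockAvg_le (hμ : IsBernoulliProduct ρ μ) {B : Finset ℤ} {g : Cfg → ℝ}
    (hg : LocalOn B g) : ∫ η, blockAvg ρ J g η ^ 2 ∂μ ≤ ∫ η, g η ^ 2 ∂μ := by
  have := hμ.1
  calc ∫ η, blockAvg ρ J g η ^ 2 ∂μ ≤ ∫ η, blockAvg ρ J (fun ξ => g ξ ^ 2) η ∂μ :=
        integral_mono (hg.blockAvg.pow 2).integrable (hg.pow 2).blockAvg.integrable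
          (sq_blockAvg_le hμ.mem_Icc g)
    _ = ∫ η, g η ^ 2 ∂μ := hμ.integral_blockAvg (hg.pow 2)

end IsBernoulliProduct

end BlockAverage

/-- The energy `E_ℓ(h)` of the bonds inside `{1,…,ℓ}`. -/
def blockEnergy (μ : Measure Cfg) (ℓ : ℕ) (h : Cfg → ℝ) : ℝ :=
  ∑ x ∈ Ico (1 : ℤ) ℓ, ∫ η, (discGrad x (x + 1) h η) ^ 2 ∂μ

section BlockEnergy

variable {μ : Measure Cfg} {ℓ : ℕ}

lemma blockEnergy_nonneg (h : Cfg → ℝ) : 0 ≤ blockEnergy μ ℓ h :=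
  sum_nonneg fun _ _ => integral_nonneg fun _ => sq_nonneg _

lemma mem_Icc_and_add_one_mem_Icc_of_mem_Ico {x : ℤ} (hx : x ∈ Ico (1 : ℤ) ℓ) :
    x ∈ Icc (1 : ℤ) ℓ ∧ x + 1 ∈ Icc (1 : ℤ) ℓ := by
  simp only [mem_Ico, mem_Icc] at hx ⊢
  omega

lemma blockEnergy_sub_psiFun (F : Cfg → ℝ) :
    blockEnergy μ ℓ (fun η => F η - psiFun ℓ F η) = blockEnergy μ ℓ F := by
  refine sum_congr rfl fun x hx => ?_
  obtain ⟨hx₁, hx₂⟩ := mem_Icc_and_add_one_mem_Icc_of_mem_Ico hx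
  simp only [discGrad, psiFun_swapCfg hx₁ hx₂, sub_sub_sub_cancel_right]

lemma IsBernoulliProduct.blockEnergy_blockAvg_le {ρ : ℝ} (hμ : IsBernoulliProduct ρ μ)
    {J B : Finset ℤ} (hJ : Disjoint J (Icc (1 : ℤ) ℓ)) {g : Cfg → ℝ} (hg : LocalOn B g) :
    blockEnergy μ ℓ (blockAvg ρ J g) ≤ blockEnergy μ ℓ g := by
  refine sum_le_sum fun x hx => ?_
  obtain ⟨hx₁, hx₂⟩ := mem_Icc_and_add_one_mem_Icc_of_mem_Ico hx
  rw [discGrad_blockAvg (disjoint_right.1 hJ hx₁) (disjoint_right.1 hJ hx₂)]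
  exact hμ.integral_sq_blockAvg_le
    ((hg.mono (subset_union_left (s₂ := {x, x + 1}))).discGrad (by simp) (by simp))

end BlockEnergy

def IndepOfZeroOne (r : Cfg → ℝ) : Prop :=
  ∀ η ξ : Cfg, (∀ x : ℤ, x ≠ 0 → x ≠ 1 → η x = ξ x) → r η = r ξ

section DirichletForm

variable {ρ : ℝ} {μ : Measure Cfg} {r : Cfg → ℝ}

lemma LocalOn.shiftRate {R : Finset ℤ} (hr : LocalOn R r) (x : ℤ) :
    LocalOn (R.image (· + x)) (shiftRate r x) :=
  fun _ _ h => hr _ _ fun z hz => h (z + x) (mem_image_of_mem _ hz)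

lemma shiftRate_swapCfg (hr₀₁ : IndepOfZeroOne r) (x : ℤ) (η : Cfg) :
    shiftRate r x (swapCfg x (x + 1) η) = shiftRate r x η :=
  hr₀₁ _ _ fun z hz₀ hz₁ => by simp [swapCfg, show z + x ≠ x by omega, show z + x ≠ x + 1 by omega]

lemma IsBernoulliProduct.integral_mul_mul_discGrad (hμ : IsBernoulliProduct ρ μ)
    {A : Finset ℤ} {u g : Cfg → ℝ} (hu : LocalOn A u) (hg : LocalOn A g) {x y : ℤ}
    (hx : x ∈ A) (hy : y ∈ A) (hu_swap : ∀ η, u (swapCfg x y η) = u η) :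
    ∫ η, g η * (u η * discGrad x y g η) ∂μ = -(1 / 2) * ∫ η, u η * discGrad x y g η ^ 2 ∂μ := by
  have := hμ.1
  have hg' := hg.comp_swapCfg hx hy
  have hexch : ∫ η, u η * g (swapCfg x y η) ^ 2 ∂μ = ∫ η, u η * g η ^ 2 ∂μ := by
    simpa only [hu_swap] using hμ.integral_comp_swapCfg (hu.mul (hg.pow 2)) hx hy
  have hsum : ∫ η, (u η * discGrad x y g η ^ 2 + 2 * (g η * (u η * discGrad x y g η))) ∂μ
      = ∫ η, u η * g (swapCfg x y η) ^ 2 ∂μ - ∫ η, u η * g η ^ 2 ∂μ := by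
    rw [← integral_sub (hu.mul (hg'.pow 2)).integrable (hu.mul (hg.pow 2)).integrable]
    congr 1 with η
    simp only [discGrad]
    ring
  rw [integral_add (hu.mul ((hg.discGrad hx hy).pow 2)).integrable
    ((hg.mul (hu.mul (hg.discGrad hx hy))).integrable.const_mul 2), integral_const_mul,
    hexch, sub_self] at hsum
  linarith

lemma discGrad_eq_zero_of_notMem {B : Finset ℤ} {g : Cfg → ℝ} (hg : LocalOn B g) {x y : ℤ}
    (hx : x ∉ B) (hy : y ∉ B) : discGrad x y g = 0 := by
  funext η
  rw [discGrad, hg (swapCfg x y η) η fun z hz => ?_, sub_self, Pi.zero_apply]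
  have hzx : z ≠ x := by rintro rfl; exact hx hz
  have hzy : z ≠ y := by rintro rfl; exact hy hz
  simp [swapCfg, hzx, hzy]

lemma genL_eq_sum {B N : Finset ℤ} {g : Cfg → ℝ} (hg : LocalOn B g)
    (hN : ∀ x, x ∈ B ∨ x + 1 ∈ B → x ∈ N) (η : Cfg) :
    genL r g η = ∑ x ∈ N, shiftRate r x η * discGrad x (x + 1) g η := by
  refine finsum_eq_sum_of_support_subset _ fun x hx => ?_
  by_contra hxN
  refine hx ?_
  dsimp only
  rw [discGrad_eq_zero_of_notMem hg (fun h => hxN (hN x (.inl h))) fun h => hxN (hN x (.inr h)),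
    Pi.zero_apply, mul_zero]

lemma IsBernoulliProduct.neg_integral_mul_genL (hμ : IsBernoulliProduct ρ μ) (hr : IsLocal r)
    (hr₀₁ : IndepOfZeroOne r) {B N : Finset ℤ} {g : Cfg → ℝ} (hg : LocalOn B g) (hN : ∀ x, x ∈ B ∨ x + 1 ∈ B → x ∈ N) :
    -∫ η, g η * genL r g η ∂μ
      = 1 / 2 * ∑ x ∈ N, ∫ η, shiftRate r x η * discGrad x (x + 1) g η ^ 2 ∂μ := by
  have := hμ.1
  obtain ⟨R, hR⟩ := hr
  have hloc : ∀ x, LocalOn (R.image (· + x) ∪ (B ∪ {x, x + 1})) g := fun x =>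
    hg.mono (subset_union_left.trans subset_union_right)
  have hrate : ∀ x, LocalOn (R.image (· + x) ∪ (B ∪ {x, x + 1})) (shiftRate r x) := fun x =>
    (hR.shiftRate x).mono subset_union_left
  simp only [genL_eq_sum hg hN, mul_sum]
  rw [integral_finsetSum _ fun x _ => ((hloc x).mul ((hrate x).mul
    ((hloc x).discGrad (by simp) (by simp)))).integrable, ← sum_neg_distrib]
  refine sum_congr rfl fun x _ => ?_
  rw [hμ.integral_mul_mul_discGrad (hrate x) (hloc x) (by simp) (by simp)
    (shiftRate_swapCfg hr₀₁ x)]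
  ring

lemma IsBernoulliProduct.mul_blockEnergy_le_neg_integral_mul_genL
    (hμ : IsBernoulliProduct ρ μ) {ε : ℝ} (hε : 0 ≤ ε) (hr : IsLocal r) (hrε : ∀ η, ε ≤ r η)
    (hr₀₁ : IndepOfZeroOne r) {g : Cfg → ℝ} (hg : IsLocal g) (ℓ : ℕ) :
    ε / 2 * blockEnergy μ ℓ g ≤ -∫ η, g η * genL r g η ∂μ := by
  have := hμ.1
  obtain ⟨B, hB⟩ := hg
  obtain ⟨R, hR⟩ := hr
  set N := B ∪ B.image (· - 1) ∪ Ico (1 : ℤ) ℓ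
  have hN : ∀ x, x ∈ B ∨ x + 1 ∈ B → x ∈ N := fun x hx => by
    rcases hx with hx | hx
    · exact mem_union_left _ (mem_union_left _ hx)
    · exact mem_union_left _ (mem_union_right _ (mem_image.2 ⟨x + 1, hx, add_sub_cancel_right x 1⟩))
  have hbond : ∀ x, ε * ∫ η, discGrad x (x + 1) g η ^ 2 ∂μ
      ≤ ∫ η, shiftRate r x η * discGrad x (x + 1) g η ^ 2 ∂μ := fun x => by
    have hgrad : LocalOn (R.image (· + x) ∪ (B ∪ {x, x + 1})) (discGrad x (x + 1) g) :=
      (hB.mono (subset_union_left.trans subset_union_right)).discGrad (by simp) (by simp)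
    rw [← integral_const_mul]
    exact integral_mono ((hgrad.pow 2).const_mul ε).integrable
      (((hR.shiftRate x).mono subset_union_left).mul (hgrad.pow 2)).integrable
      fun η => mul_le_mul_of_nonneg_right (hrε _) (sq_nonneg _)
  have hnonneg : ∀ x, 0 ≤ ∫ η, shiftRate r x η * discGrad x (x + 1) g η ^ 2 ∂μ := fun x =>
    (mul_nonneg hε (integral_nonneg fun _ => sq_nonneg _)).trans (hbond x)
  rw [hμ.neg_integral_mul_genL ⟨R, hR⟩ hr₀₁ hB hN, blockEnergy, div_eq_mul_inv, mul_comm ε,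
    mul_assoc, mul_sum, one_div]
  gcongr
  calc ∑ x ∈ Ico (1 : ℤ) ℓ, ε * ∫ η, discGrad x (x + 1) g η ^ 2 ∂μ
      ≤ ∑ x ∈ Ico (1 : ℤ) ℓ, ∫ η, shiftRate r x η * discGrad x (x + 1) g η ^ 2 ∂μ :=
        sum_le_sum fun x _ => hbond x
    _ ≤ ∑ x ∈ N, ∫ η, shiftRate r x η * discGrad x (x + 1) g η ^ 2 ∂μ :=
        sum_le_sum_of_subset_of_nonneg subset_union_right fun x _ _ => hnonneg x

end DirichletForm

lemma two_mul_sub_le_of_sq_le_mul_of_le_mul {x a b K D : ℝ} (hx : x ^ 2 ≤ a * b)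
    (hb : b ≤ K * D) (ha : 0 ≤ a) (hK : 0 ≤ K) (hD : 0 ≤ D) : 2 * x - D ≤ K * a := by
  have := two_mul_le_add_of_sq_le_mul (mul_nonneg hK ha) hD
    (hx.trans ((mul_le_mul_of_nonneg_left hb ha).trans_eq (by ring)))
  linarith

/-- **H₋₁ bound via the spectral gap** (Proposition 4.4). In the lattice gas setup, if
the spectral gap inequality holds with constant `κ₀`, then there is a constant `c`
depending only on `κ₀` and `ε₀` such that for every `ℓ` and every local `f` supported
in `{1,…,ℓ}` with `φ_f ≡ 0` on `[0,1]`, and every local `g`,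
`2⟨f,g⟩_ρ − ⟨g, −Lg⟩_ρ ≤ c ℓ² Var(f; ν_ρ)`; i.e. `‖f‖²₋₁ ≤ c ℓ² Var(f; ν_ρ)`. -/
theorem H_minus_one_bound (κ₀ ε₀ : ℝ) (hε : 0 < ε₀) :
    ∃ c : ℝ, ∀ r : Cfg → ℝ, IsLocal r →
      (∀ η, ε₀ ≤ r η ∧ r η ≤ ε₀⁻¹) →
      (∀ η ξ : Cfg, (∀ x : ℤ, x ≠ 0 → x ≠ 1 → η x = ξ x) → r η = r ξ) →
      ∀ ρ : ℝ, ρ ∈ Set.Ioo (0 : ℝ) 1 →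
      ∀ μ : Measure Cfg, IsBernoulliProduct ρ μ →
      (∀ (ℓ : ℕ) (h : Cfg → ℝ), LocalOn (Finset.Icc (1 : ℤ) (ℓ : ℤ)) h →
          (∀ β ∈ Set.Icc (0 : ℝ) 1, phi (Finset.Icc (1 : ℤ) (ℓ : ℤ)) h β = 0) →
          ∫ η, h η ^ 2 ∂μ
            ≤ κ₀ * (ℓ : ℝ) ^ 2 * ∑ x ∈ Finset.Ico (1 : ℤ) (ℓ : ℤ),
                ∫ η, (discGrad x (x + 1) h η) ^ 2 ∂μ) →
      ∀ (ℓ : ℕ) (f : Cfg → ℝ), LocalOn (Finset.Icc (1 : ℤ) (ℓ : ℤ)) f →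
        (∀ β ∈ Set.Icc (0 : ℝ) 1, phi (Finset.Icc (1 : ℤ) (ℓ : ℤ)) f β = 0) →
        ∀ g : Cfg → ℝ, IsLocal g →
          2 * ∫ η, f η * g η ∂μ - (- ∫ η, g η * genL r g η ∂μ)
            ≤ c * (ℓ : ℝ) ^ 2 * Var μ f := by
  refine ⟨2 * max κ₀ 0 / ε₀, fun r hr hrε hr₀₁ ρ _ μ hμ hgap ℓ f hf hφf g hg => ?_⟩
  obtain ⟨B, hB⟩ := hg
  set gbar := blockAvg ρ (B \ Icc (1 : ℤ) ℓ) g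
  set h := fun η => gbar η - psiFun ℓ gbar η
  set D := -∫ η, g η * genL r g η ∂μ
  have hgbar : LocalOn (Icc (1 : ℤ) ℓ) gbar :=
    hB.blockAvg.mono (sdiff_sdiff_right_self.trans_subset inter_subset_right)
  have hh : LocalOn (Icc (1 : ℤ) ℓ) h := hgbar.sub (localOn_psiFun gbar)
  have hfg : ∫ η, f η * g η ∂μ = ∫ η, f η * h η ∂μ := by
    rw [hμ.integral_mul_blockAvg hf disjoint_sdiff hB,
      hμ.integral_mul_sub_psiFun hf (phi_eq_zero_iff.1 hφf) hgbar]
  have hE : ε₀ / 2 * blockEnergy μ ℓ h ≤ D := by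
    rw [blockEnergy_sub_psiFun]
    exact (mul_le_mul_of_nonneg_left (hμ.blockEnergy_blockAvg_le sdiff_disjoint hB)
      (by positivity)).trans (hμ.mul_blockEnergy_le_neg_integral_mul_genL hε.le hr
        (fun η => (hrε η).1) hr₀₁ ⟨B, hB⟩ ℓ)
  have hh₂ : ∫ η, h η ^ 2 ∂μ ≤ 2 * max κ₀ 0 / ε₀ * ℓ ^ 2 * D :=
    calc ∫ η, h η ^ 2 ∂μ ≤ κ₀ * ℓ ^ 2 * blockEnergy μ ℓ h :=
          hgap ℓ h hh (phi_eq_zero_iff.2 (sum_powersetCard_sub_psiFun gbar))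
      _ ≤ max κ₀ 0 * ℓ ^ 2 * blockEnergy μ ℓ h := by
          gcongr
          exacts [blockEnergy_nonneg h, le_max_left _ _]
      _ = 2 * max κ₀ 0 / ε₀ * ℓ ^ 2 * (ε₀ / 2 * blockEnergy μ ℓ h) := by field_simp
      _ ≤ 2 * max κ₀ 0 / ε₀ * ℓ ^ 2 * D := by gcongr
  have hD : 0 ≤ D := (mul_nonneg (by positivity) (blockEnergy_nonneg h)).trans hE
  have hVar : Var μ f = ∫ η, f η ^ 2 ∂μ := by
    simp [Var, (hμ.integral_eq_sum hf).trans (hφf ρ hμ.mem_Icc)]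
  rw [hVar, hfg]
  exact two_mul_sub_le_of_sq_le_mul_of_le_mul (hμ.sq_integral_mul_le hf hh) hh₂
    (integral_nonneg fun _ => sq_nonneg _) (by positivity) hD
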